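/- arXiv:1510.06278 — 2 statements merged into one kernel-verified Lean document; each statement's English description precedes it below -/
import Mathlib

section
/- Let D be a nonprincipal ultrafilter on an infinite cardinal κ, let J be a linear order, let λ be a regular cardinal, let ⟨f_β : β < λ⟩ be a <_D-increasing sequence of functions from κ to J, and let I be a set with I ⊆ J and |I|^κ < λ. Then there exists β_* < λ such that for every function g : κ → I and every β with β_* ≤ β < λ: g <_D f_β if and only if g <_D f_{β_*}, and f_β <_D g if and only if f_{β_*} <_D g. -/
open Cardinal Set

/-- `f <_D g` : the set of coordinates where `f i < g i` belongs to the ultrafilter `D`. -/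
def ltD {ι J : Type} [LinearOrder J] (D : Ultrafilter ι) (f g : ι → J) : Prop :=
  {i | f i < g i} ∈ D

/-- An ultrafilter is nonprincipal iff it contains the complement of every singleton. -/
def Nonprincipal {ι : Type} (D : Ultrafilter ι) : Prop :=
  ∀ i : ι, ({i}ᶜ : Set ι) ∈ D

/-- `μ`-completeness: any intersection of fewer than `μ` members of `D` belongs to `D`. -/
def IsCompleteUF (μ : Cardinal) {ι : Type} (D : Ultrafilter ι) : Prop :=
  ∀ s : Set (Set ι), #s < μ → (∀ A ∈ s, A ∈ D) → ⋂₀ s ∈ D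

/-- A uniform ultrafilter: every member has full cardinality. -/
def IsUniformUF {ι : Type} (D : Ultrafilter ι) : Prop :=
  ∀ A ∈ D, #A = #ι

/-- The sequences `f` (indexed by `T₁`) and `g` (indexed by `T₂`) represent a
`(T₁, T₂)`-cut of the ultrapower `J^ι/D`: `f` is `<_D`-increasing, `g` is `<_D`-decreasing,
every `f a` is `<_D`-below every `g b`, and no element fills the cut. -/
def RepCut {ι J : Type} [LinearOrder J] {T₁ T₂ : Type} [LinearOrder T₁] [LinearOrder T₂]
    (D : Ultrafilter ι) (f : T₁ → ι → J) (g : T₂ → ι → J) : Prop :=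
  (∀ a b : T₁, a < b → ltD D (f a) (f b)) ∧
  (∀ a b : T₂, a < b → ltD D (g b) (g a)) ∧
  (∀ (a : T₁) (b : T₂), ltD D (f a) (g b)) ∧
  ¬∃ h : ι → J, (∀ a : T₁, ltD D (f a) h) ∧ ∀ b : T₂, ltD D h (g b)

/-- `τ⁺`-saturation of a dense linear order: any two sets of size `≤ τ`, one entirely
below the other, can be separated by a point. -/
def SatPlus (τ : Cardinal) (J : Type) [LinearOrder J] : Prop :=
  ∀ A B : Set J, #A ≤ τ → #B ≤ τ → (∀ a ∈ A, ∀ b ∈ B, a < b) →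
    ∃ t : J, (∀ a ∈ A, a < t) ∧ ∀ b ∈ B, t < b

/-! For a fixed `g`, the truth value of `g <_D f b` is monotone in `b` and that of `f b <_D g`
antitone, so both stabilise past some threshold depending on `g`. There are only
`|I|^κ < λ = cf λ` functions `g : κ → I`, so these thresholds are bounded below `λ`. -/

open Filter

universe u

theorem Order.exists_forall_le_of_mk_lt_cof {α X : Type u} [LinearOrder α] (u : X → α)
    (hX : #X < Order.cof α) : ∃ b, ∀ x, u x ≤ b := by
  have hrange : ¬IsCofinal (range u) := fun hcof =>
    (Order.cof_le hcof).trans mk_range_le |>.not_gt hX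
  obtain ⟨b, hb⟩ := not_isCofinal_iff.mp hrange
  exact ⟨b, fun x => (hb _ (mem_range_self x)).le⟩

theorem Monotone.eventuallyConst_atTop {α : Type*} [Preorder α] {p : α → Prop}
    (hp : Monotone p) : EventuallyConst p atTop := by
  refine eventuallyConst_pred.mpr ?_
  by_cases h : ∃ a, p a
  · obtain ⟨a, ha⟩ := h
    exact .inl <| (eventually_ge_atTop a).mono fun b hab => hp hab ha
  · exact .inr <| .of_forall fun b hb => h ⟨b, hb⟩

theorem Antitone.eventuallyConst_atTop {α : Type*} [Preorder α] {p : α → Prop}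
    (hp : Antitone p) : EventuallyConst p atTop := by
  refine eventuallyConst_pred.mpr ?_
  by_cases h : ∃ a, ¬p a
  · obtain ⟨a, ha⟩ := h
    exact .inr <| (eventually_ge_atTop a).mono fun b hab hb => ha (hp hab hb)
  · exact .inl <| .of_forall fun b => not_not.mp (not_exists.mp h b)

theorem exists_forall_ge_eq_of_mk_lt_cof {α X : Type u} {β : Type*} [LinearOrder α]
    {u : X → α → β} (hu : ∀ x, EventuallyConst (u x) atTop) (hX : #X < Order.cof α) :
    ∃ b₀, ∀ x b, b₀ ≤ b → u x b = u x b₀ := by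
  have : Nonempty α := Order.cof_ne_zero_iff.mp (hX.trans_le' zero_le).ne'
  choose t ht using fun x => eventuallyConst_atTop.mp (hu x)
  obtain ⟨b₀, hb₀⟩ := Order.exists_forall_le_of_mk_lt_cof t hX
  exact ⟨b₀, fun x b hb => (ht x b ((hb₀ x).trans hb)).trans (ht x b₀ (hb₀ x)).symm⟩

section ltD

variable {ι J : Type} [LinearOrder J] {D : Ultrafilter ι}

theorem ltD_trans {f g h : ι → J} (hfg : ltD D f g) (hgh : ltD D g h) : ltD D f h :=
  mem_of_superset (inter_mem hfg hgh) fun _ hi => hi.1.trans hi.2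

variable {T : Type} [PartialOrder T] {f : T → ι → J}

theorem monotone_ltD_of_increasing (hinc : ∀ a b, a < b → ltD D (f a) (f b)) (g : ι → J) :
    Monotone fun b => ltD D g (f b) := by
  intro a b hab hg
  rcases hab.lt_or_eq with hlt | rfl
  · exact ltD_trans hg (hinc a b hlt)
  · exact hg

theorem antitone_ltD_of_increasing (hinc : ∀ a b, a < b → ltD D (f a) (f b)) (g : ι → J) :
    Antitone fun b => ltD D (f b) g := by
  intro a b hab hg
  rcases hab.lt_or_eq with hlt | rfl
  · exact ltD_trans (hinc a b hlt) hg
  · exact hg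

end ltD

theorem eventually_constant_relation_general
    {ι : Type} (D : Ultrafilter ι)
    (J : Type) [LinearOrder J] (lam : Cardinal) (hlam : lam.IsRegular)
    (f : lam.ord.ToType → ι → J) (hinc : ∀ a b, a < b → ltD D (f a) (f b))
    (I : Set J) (hI : #I ^ #ι < lam) :
    ∃ b₀ : lam.ord.ToType, ∀ g : ι → J, (∀ i, g i ∈ I) → ∀ b, b₀ ≤ b →
      ((ltD D g (f b) ↔ ltD D g (f b₀)) ∧ (ltD D (f b) g ↔ ltD D (f b₀) g)) := by
  let relation (g : ι → I) (b : lam.ord.ToType) : Prop × Prop :=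
    (ltD D (Subtype.val ∘ g) (f b), ltD D (f b) (Subtype.val ∘ g))
  have hconst (g : ι → I) : EventuallyConst (relation g) atTop :=
    ((monotone_ltD_of_increasing hinc _).eventuallyConst_atTop).prodMk
      ((antitone_ltD_of_increasing hinc _).eventuallyConst_atTop)
  have hcard : #(ι → I) < Order.cof lam.ord.ToType := by
    rwa [Ordinal.cof_toType, hlam.cof_ord, ← power_def]
  obtain ⟨b₀, hb₀⟩ := exists_forall_ge_eq_of_mk_lt_cof hconst hcard
  refine ⟨b₀, fun g hg b hb => ?_⟩
  have hrel := Prod.ext_iff.mp (hb₀ (fun i => ⟨g i, hg i⟩) b hb)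
  exact ⟨iff_of_eq hrel.1, iff_of_eq hrel.2⟩

/-- Claim 2.17: for a `<_D`-increasing `λ`-sequence `f` in `J^κ` and a set
`I ⊆ J` with `|I|^κ < λ` (`λ` regular), there is a threshold `b₀ < λ` past which the
`<_D`-relationship of any `I`-valued function to `f b` stabilizes. -/
theorem eventually_constant_relation
    {ι : Type} [Infinite ι] (D : Ultrafilter ι) (hD : Nonprincipal D)
    (J : Type) [LinearOrder J] (lam : Cardinal) (hlam : lam.IsRegular)
    (f : lam.ord.ToType → ι → J) (hinc : ∀ a b, a < b → ltD D (f a) (f b))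
    (I : Set J) (hI : #I ^ #ι < lam) :
    ∃ b₀ : lam.ord.ToType, ∀ g : ι → J, (∀ i, g i ∈ I) → ∀ b, b₀ ≤ b →
      ((ltD D g (f b) ↔ ltD D g (f b₀)) ∧ (ltD D (f b) g ↔ ltD D (f b₀) g)) :=
  eventually_constant_relation_general D J lam hlam f hinc I hI
end

section
/- Suppose κ > ℵ₀ and D is a uniform κ-complete nonprincipal ultrafilter on the cardinal κ (so κ is measurable). Then (κ⁺, κ⁺) ∈ C(D): for every κ⁺⁺-saturated dense linear order J without endpoints, there exist sequences ⟨f_α : α < κ⁺⟩ and ⟨g_β : β < κ⁺⟩ of functions from κ to J that represent a (κ⁺, κ⁺)-cut of J^κ/D. -/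
/-!
Build, by recursion on `b < κ⁺`, sequences `F b : κ → J × J` of intervals of `J` such that
`F b` is nested inside every earlier `F a` modulo `D`, two intervals at the same coordinate
that meet are nested, and `F b i` lies inside fewer than `κ` earlier intervals `F a i`.
At stage `b`, `κ`-completeness and uniformity yield for each coordinate `i` a set `V i` of
fewer than `κ` earlier stages forming a chain at `i`, such that every stage lies in `V i` for
`D`-almost all `i`; `κ⁺⁺`-saturation places the new interval at `i` inside this chain and above
every endpoint lying below it, which keeps the invariants. The lower and upper endpoints then
represent a cut: for a filler `h`, the intervals containing `h i` form a chain at `i` in which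
each member has fewer than `κ` predecessors, so there are at most `κ` of them, and `κ · κ < κ⁺`.
-/

open Cardinal Set

open Filter

open Classical in
theorem WellFoundedLT.exists_forall_of_exists_step {T X : Type} [Preorder T] [WellFoundedLT T]
    [Nonempty X] (Good : T → (T → X) → X → Prop)
    (hlocal : ∀ b F G x, EqOn F G (Iio b) → Good b F x → Good b G x)
    (step : ∀ F b, (∀ a < b, Good a F (F a)) → ∃ x, Good b F x) :
    ∃ F : T → X, ∀ b, Good b F (F b) := by
  let extend (b : T) (hist : ∀ a, a < b → X) : T → X := fun a =>
    if h : a < b then hist a h else Classical.arbitrary X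
  let F : T → X := wellFounded_lt.fix fun b hist =>
    if h : ∃ x, Good b (extend b hist) x then h.choose else Classical.arbitrary X
  have hF : ∀ b, F b = if h : ∃ x, Good b (extend b fun a _ => F a) x then h.choose
      else Classical.arbitrary X :=
    fun b => wellFounded_lt.fix_eq _ b
  have h_extend : ∀ b, EqOn F (extend b fun a _ => F a) (Iio b) :=
    fun b a ha => by simp only [extend, dif_pos (show a < b from ha)]
  refine ⟨F, fun b => ?_⟩
  induction b using WellFoundedLT.induction with
  | ind b ih =>
    obtain ⟨x, hx⟩ := step F b ih
    have hex : ∃ x, Good b (extend b fun a _ => F a) x :=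
      ⟨x, hlocal b _ _ x (h_extend b) hx⟩
    rw [hF b, dif_pos hex]
    exact hlocal b _ _ _ (h_extend b).symm hex.choose_spec

theorem Cardinal.mk_le_of_forall_mk_Iio_lt {α : Type*} [LinearOrder α] [WellFoundedLT α]
    {c : Cardinal} (h : ∀ a : α, #(Iio a) < c) : #α ≤ c := by
  have : IsWellOrder α (· < ·) := isWellOrder_lt
  let f : α → Iio c.ord := fun a => ⟨Ordinal.typein (· < ·) a, mem_Iio.2 (lt_ord.2 (h a))⟩
  have hf : Function.Injective f := fun a b hab =>
    Ordinal.typein_injective (· < ·) (congrArg Subtype.val hab)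
  simpa using lift_mk_le_lift_mk_of_injective hf

section Intervals

variable {J : Type} [LinearOrder J]

-- A pair `u : J × J` codes the open interval `Ioo u.1 u.2`.
def Nests (u v : J × J) : Prop :=
  u.1 < v.1 ∧ v.2 < u.2

def NestsOrDisjoint (u v : J × J) : Prop :=
  ∀ x ∈ Ioo u.1 u.2, x ∈ Ioo v.1 v.2 → Nests u v

theorem SatPlus.nonempty {τ : Cardinal} (hsat : SatPlus τ J) : Nonempty J :=
  let ⟨t, _⟩ := hsat ∅ ∅ (by simp) (by simp) (by simp)
  ⟨t⟩

theorem SatPlus.exists_pair_between {τ : Cardinal} (hsat : SatPlus τ J) (hτ : ℵ₀ ≤ τ)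
    {A B : Set J} (hA : #A ≤ τ) (hB : #B ≤ τ) (hAB : ∀ a ∈ A, ∀ b ∈ B, a < b) :
    ∃ t₁ t₂, t₁ < t₂ ∧ (∀ a ∈ A, a < t₁) ∧ ∀ b ∈ B, t₂ < b := by
  obtain ⟨t₁, hAt₁, ht₁B⟩ := hsat A B hA hB hAB
  have hA' : #(insert t₁ A : Set J) ≤ τ :=
    mk_insert_le.trans ((add_le_add_left hA 1).trans (add_one_eq hτ).le)
  obtain ⟨t₂, hAt₂, ht₂B⟩ := hsat (insert t₁ A) B hA' hB <| by
    rintro a (rfl | ha) b hb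
    exacts [ht₁B b hb, (hAt₁ a ha).trans (ht₁B b hb)]
  exact ⟨t₁, t₂, hAt₂ t₁ (mem_insert _ _), hAt₁, ht₂B⟩

theorem exists_nests_of_chain {τ : Cardinal} (hsat : SatPlus τ J) (hτ : ℵ₀ ≤ τ)
    {P : Type} [LinearOrder P] (hP : #P ≤ τ) (I : P → J × J) (hI : ∀ p, (I p).1 < (I p).2)
    (hI_coh : ∀ p p', p < p' → NestsOrDisjoint (I p) (I p')) (V : Set P)
    (hV : ∀ p ∈ V, ∀ p' ∈ V, p < p' → Nests (I p) (I p')) :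
    ∃ u : J × J, u.1 < u.2 ∧ (∀ p ∈ V, Nests (I p) u) ∧ (∀ p, NestsOrDisjoint (I p) u) ∧
      ∀ p, Nests (I p) u → p ∈ V ∨ ∃ p₀ ∈ V, p < p₀ ∧ Nests (I p) (I p₀) := by
  set A : Set J := {x | x ∈ range (fun p => (I p).1) ∪ range (fun p => (I p).2) ∧
    ∀ p ∈ V, x < (I p).2}
  set B : Set J := (fun p => (I p).2) '' V
  have hA : #A ≤ τ := by
    refine (mk_le_mk_of_subset fun x hx => hx.1).trans <| (mk_union_le _ _).trans ?_
    exact (add_le_add (mk_range_le.trans hP) (mk_range_le.trans hP)).trans (add_eq_self hτ).le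
  have hB : #B ≤ τ := mk_image_le.trans (mk_set_le V |>.trans hP)
  obtain ⟨t₁, t₂, ht, hAt, htB⟩ := hsat.exists_pair_between hτ hA hB <| by
    rintro x ⟨-, hx⟩ _ ⟨p, hp, rfl⟩
    exact hx p hp
  have left_lt : ∀ p ∈ V, (I p).1 < t₁ := by
    refine fun p hp => hAt _ ⟨Or.inl ⟨p, rfl⟩, fun p' hp' => ?_⟩
    rcases lt_trichotomy p p' with h | rfl | h
    exacts [(hV p hp p' hp' h).1.trans (hI p'), hI p, (hI p).trans (hV p' hp' p hp h).2]
  have lt_right : ∀ p ∈ V, t₂ < (I p).2 := fun p hp => htB _ ⟨p, hp, rfl⟩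
  have right_ge : ∀ p, t₁ < (I p).2 → ∃ p₀ ∈ V, (I p₀).2 ≤ (I p).2 := by
    intro p hp
    by_contra! h
    exact (hAt _ ⟨Or.inr ⟨p, rfl⟩, h⟩).not_gt hp
  have left_lt' : ∀ p, (I p).1 < t₂ → (I p).1 < t₁ := by
    intro p hp
    by_contra! h
    obtain ⟨p₀, hp₀, hle⟩ : ∃ p₀ ∈ V, (I p₀).2 ≤ (I p).1 := by
      by_contra! h'
      exact (hAt _ ⟨Or.inl ⟨p, rfl⟩, h'⟩).not_ge h
    exact (hle.trans_lt hp).not_gt (lt_right p₀ hp₀)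
  refine ⟨(t₁, t₂), ht, fun p hp => ⟨left_lt p hp, lt_right p hp⟩, ?_, ?_⟩
  · rintro p x ⟨hpx, hxp⟩ ⟨htx, hxt⟩
    obtain ⟨p₀, hp₀, hle⟩ := right_ge p (htx.trans hxp)
    exact ⟨left_lt' p (hpx.trans hxt), (lt_right p₀ hp₀).trans_le hle⟩
  · intro p hp
    by_cases hpV : p ∈ V
    · exact Or.inl hpV
    obtain ⟨p₀, hp₀, hle⟩ := right_ge p (ht.trans hp.2)
    have ht₁ : t₁ ∈ Ioo (I p₀).1 (I p₀).2 := ⟨left_lt p₀ hp₀, ht.trans (lt_right p₀ hp₀)⟩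
    have ht₁' : t₁ ∈ Ioo (I p).1 (I p).2 := ⟨hp.1, ht.trans hp.2⟩
    rcases lt_or_gt_of_ne (ne_of_mem_of_not_mem hp₀ hpV).symm with h | h
    · exact Or.inr ⟨p₀, hp₀, h, hI_coh p p₀ h t₁ ht₁' ht₁⟩
    · exact absurd ((hI_coh p₀ p h t₁ ht₁ ht₁').2.trans_le hle) (lt_irrefl _)

end Intervals

section Ultrafilters

variable {ι : Type} {D : Ultrafilter ι}

theorem IsCompleteUF.cardinalInterFilter {μ : Cardinal} (hcomp : IsCompleteUF μ D) :
    CardinalInterFilter (D : Filter ι) μ :=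
  ⟨hcomp⟩

theorem IsUniformUF.eventually_lt (huni : IsUniformUF D) (hκ : ℵ₀ ≤ #ι)
    (r : ι ≃ (#ι).ord.ToType) (ζ : (#ι).ord.ToType) : ∀ᶠ i in (D : Filter ι), ζ < r i := by
  refine (D.mem_or_compl_mem _).resolve_right fun h => (huni _ h).not_lt ?_
  calc #({i | ζ < r i}ᶜ : Set ι) ≤ #(Iic ζ) :=
        mk_le_of_injective (f := fun i => (⟨r i, le_of_not_gt (show ¬ζ < r i from i.2)⟩ : Iic ζ))
          fun i j hij => Subtype.ext (r.injective (congrArg Subtype.val hij))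
    _ < #ι := by simpa using mk_Iic_lt ζ (by simp) (by simpa using hκ)

theorem IsCompleteUF.isRegular (hcomp : IsCompleteUF #ι D) (huni : IsUniformUF D)
    (hκ : ℵ₀ ≤ #ι) : (#ι).IsRegular := by
  refine ⟨hκ, not_lt.mp fun hcof => ?_⟩
  have := hcomp.cardinalInterFilter
  obtain ⟨S, hS, hSκ⟩ := Order.exists_cof_eq (#ι).ord.ToType
  rw [Ordinal.cof_toType] at hSκ
  obtain ⟨r⟩ := Cardinal.eq.mp (mk_ord_toType #ι).symm
  have hlt : ∀ᶠ i in (D : Filter ι), ∀ ζ : S, (ζ : (#ι).ord.ToType) < r i :=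
    (eventually_cardinal_forall (hSκ ▸ hcof)).2 fun ζ => huni.eventually_lt hκ r ζ
  obtain ⟨i, hi⟩ := hlt.exists
  obtain ⟨ζ, hζS, hζ⟩ := hS (r i)
  exact (hi ⟨ζ, hζS⟩).not_ge hζ

/-- Enumerating `P` in order type `κ` by `e`, the set `V i` collects the `p` with `e p < r i`
whose pairs among the first `e p` indices all satisfy `R` at `i`; by `κ`-completeness each such
condition holds `D`-almost everywhere. -/
theorem IsCompleteUF.exists_small_pairwise_sets (hcomp : IsCompleteUF #ι D)
    (huni : IsUniformUF D) (hκ : ℵ₀ ≤ #ι) {P : Type} (hP : #P ≤ #ι) (R : P → P → ι → Prop)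
    (hR : ∀ p p', ∀ᶠ i in (D : Filter ι), R p p' i) :
    ∃ V : ι → Set P, (∀ i, #(V i) < #ι) ∧ (∀ p, ∀ᶠ i in (D : Filter ι), p ∈ V i) ∧
      ∀ i, ∀ p ∈ V i, ∀ p' ∈ V i, R p p' i := by
  have := hcomp.cardinalInterFilter
  obtain ⟨r⟩ := Cardinal.eq.mp (mk_ord_toType #ι).symm
  obtain ⟨e⟩ : Nonempty (P ↪ (#ι).ord.ToType) := by
    rwa [← Cardinal.le_def, mk_ord_toType]
  have hIic : ∀ ζ : (#ι).ord.ToType, #(Iic ζ) < #ι := fun ζ => by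
    simpa using mk_Iic_lt ζ (by simp) (by simpa using hκ)
  set Below : (#ι).ord.ToType → Type := fun ζ => {x : P × P // e x.1 ≤ ζ ∧ e x.2 ≤ ζ}
  have hBelow : ∀ ζ, ∀ᶠ i in (D : Filter ι), ∀ x : Below ζ, R x.1.1 x.1.2 i := by
    refine fun ζ => (eventually_cardinal_forall (c := #ι) ?_).2 fun x => hR _ _
    calc #(Below ζ) ≤ #(Iic ζ × Iic ζ) :=
          mk_le_of_injective (f := fun x => (⟨e x.1.1, x.2.1⟩, ⟨e x.1.2, x.2.2⟩))
            fun x y hxy => Subtype.ext <| Prod.ext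
              (e.injective (congrArg (fun z => z.1.1) hxy))
              (e.injective (congrArg (fun z => z.2.1) hxy))
      _ < #ι := by simpa using mul_lt_of_lt hκ (hIic ζ) (hIic ζ)
  refine ⟨fun i => {p | e p < r i ∧ ∀ x : Below (e p), R x.1.1 x.1.2 i}, fun i => ?_,
    fun p => (huni.eventually_lt hκ r (e p)).and (hBelow (e p)), ?_⟩
  · calc #{p | e p < r i ∧ ∀ x : Below (e p), R x.1.1 x.1.2 i} ≤ #(Iio (r i)) :=
          mk_le_of_injective (f := fun p => ⟨e p, p.2.1⟩) fun p q hpq =>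
            Subtype.ext (e.injective (congrArg Subtype.val hpq))
      _ < #ι := by simpa using mk_Iio_lt (r i) (by simp)
  · rintro i p ⟨-, hp⟩ p' ⟨-, hp'⟩
    rcases le_total (e p) (e p') with h | h
    exacts [hp' ⟨(p, p'), h, le_rfl⟩, hp ⟨(p, p'), le_rfl, h⟩]

end Ultrafilters

section Construction

variable {ι J : Type} [LinearOrder J] (D : Ultrafilter ι)

structure IsGoodExtension {P : Type} (F : P → ι → J × J) (s : Set P) (q : ι → J × J) : Prop where
  lt : ∀ i, (q i).1 < (q i).2
  eventually_nests : ∀ p ∈ s, ∀ᶠ i in (D : Filter ι), Nests (F p i) (q i)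
  nestsOrDisjoint : ∀ p ∈ s, ∀ i, NestsOrDisjoint (F p i) (q i)
  mk_nests_lt : ∀ i, #{p | p ∈ s ∧ Nests (F p i) (q i)} < #ι

variable {D}

theorem IsGoodExtension.congr {P : Type} {F G : P → ι → J × J} {s : Set P} {q : ι → J × J}
    (h : IsGoodExtension D F s q) (hFG : EqOn F G s) : IsGoodExtension D G s q where
  lt := h.lt
  eventually_nests p hp := hFG hp ▸ h.eventually_nests p hp
  nestsOrDisjoint p hp := hFG hp ▸ h.nestsOrDisjoint p hp
  mk_nests_lt i := by
    have : {p | p ∈ s ∧ Nests (G p i) (q i)} = {p | p ∈ s ∧ Nests (F p i) (q i)} :=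
      Set.ext fun p => and_congr_right fun hp => by rw [hFG hp]
    exact this ▸ h.mk_nests_lt i

theorem exists_isGoodExtension (hcomp : IsCompleteUF #ι D) (huni : IsUniformUF D)
    (hκ : ℵ₀ ≤ #ι) (hsat : SatPlus (Order.succ #ι) J) {P : Type} [LinearOrder P]
    (F : P → ι → J × J) (s : Set P) (hs : #s ≤ #ι)
    (hF : ∀ p ∈ s, IsGoodExtension D F (Iio p) (F p)) : ∃ q, IsGoodExtension D F s q := by
  obtain ⟨V, hV_card, hV_mem, hV_chain⟩ := hcomp.exists_small_pairwise_sets huni hκ hs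
    (fun p p' i => p < p' → Nests (F p i) (F p' i)) fun p p' => by
      by_cases h : p < p'
      · exact (hF p' p'.2 |>.eventually_nests p h).mono fun i hi _ => hi
      · exact .of_forall fun i h' => absurd h' h
  have hτ : ℵ₀ ≤ Order.succ #ι := hκ.trans (Order.le_succ _)
  choose q hq_lt hq_nests hq_coh hq_small using fun i =>
    exists_nests_of_chain hsat hτ (hs.trans (Order.le_succ _)) (fun p : s => F p i)
      (fun p => (hF p p.2).lt i) (fun p p' h => (hF p' p'.2).nestsOrDisjoint p h i) (V i)
      (hV_chain i)
  refine ⟨fun i => q i, ⟨hq_lt, fun p hp => ?_, fun p hp i => hq_coh i ⟨p, hp⟩, fun i => ?_⟩⟩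
  · exact (hV_mem ⟨p, hp⟩).mono fun i hi => hq_nests i _ hi
  · have hsub : {p | p ∈ s ∧ Nests (F p i) (q i)} ⊆ Subtype.val '' V i ∪
        ⋃ p₀ ∈ V i, {p | p ∈ Iio p₀.1 ∧ Nests (F p i) (F p₀ i)} := by
      rintro p ⟨hp, hpq⟩
      rcases hq_small i ⟨p, hp⟩ hpq with hpV | ⟨p₀, hp₀, hlt, hpp₀⟩
      exacts [Or.inl ⟨_, hpV, rfl⟩, Or.inr (mem_biUnion hp₀ ⟨hlt, hpp₀⟩)]
    refine (mk_le_mk_of_subset hsub).trans_lt <| (mk_union_le _ _).trans_lt <|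
      add_lt_of_lt hκ (mk_image_le.trans_lt (hV_card i)) ?_
    exact (card_biUnion_lt_iff_forall_of_isRegular (hcomp.isRegular huni hκ) (hV_card i)).2
      fun p₀ _ => (hF p₀ p₀.2).mk_nests_lt i

end Construction

theorem exists_isGoodExtension_family {ι J : Type} [LinearOrder J] {D : Ultrafilter ι}
    (hcomp : IsCompleteUF #ι D) (huni : IsUniformUF D) (hκ : ℵ₀ ≤ #ι)
    (hsat : SatPlus (Order.succ #ι) J) {T : Type} [LinearOrder T] [WellFoundedLT T]
    (hT : ∀ b : T, #(Iio b) ≤ #ι) :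
    ∃ F : T → ι → J × J, ∀ b, IsGoodExtension D F (Iio b) (F b) := by
  have := hsat.nonempty
  exact WellFoundedLT.exists_forall_of_exists_step (fun b F x => IsGoodExtension D F (Iio b) x)
    (fun b F G x hFG h => h.congr hFG) fun F b ih =>
      exists_isGoodExtension hcomp huni hκ hsat F (Iio b) (hT b) ih

theorem repCut_of_isGoodExtension {ι J T : Type} [LinearOrder J] [LinearOrder T]
    [WellFoundedLT T] {D : Ultrafilter ι} (hκ : ℵ₀ ≤ #ι) (hT : #ι < #T) (F : T → ι → J × J)
    (hF : ∀ b, IsGoodExtension D F (Iio b) (F b)) :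
    RepCut D (fun a i => (F a i).1) (fun a i => (F a i).2) := by
  have nests : ∀ a b, a < b → ∀ᶠ i in (D : Filter ι), Nests (F a i) (F b i) :=
    fun a b h => (hF b).eventually_nests a h
  refine ⟨fun a b h => (nests a b h).mono fun i hi => hi.1,
    fun a b h => (nests a b h).mono fun i hi => hi.2, fun a b => ?_, ?_⟩
  · rcases lt_trichotomy a b with h | rfl | h
    · exact (nests a b h).mono fun i hi => hi.1.trans ((hF b).lt i)
    · exact Eventually.of_forall fun i => (hF a).lt i
    · exact (nests b a h).mono fun i hi => ((hF a).lt i).trans hi.2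
  rintro ⟨h, hfh, hhg⟩
  set S : ι → Set T := fun i => {a | h i ∈ Ioo (F a i).1 (F a i).2}
  have hS : ∀ i, #(S i) ≤ #ι := fun i => mk_le_of_forall_mk_Iio_lt fun b =>
    calc #(Iio b) ≤ #{a | a ∈ Iio b.1 ∧ Nests (F a i) (F b i)} :=
          mk_le_of_injective (f := fun a => ⟨a.1.1, a.2,
            (hF b).nestsOrDisjoint a.1 a.2 i (h i) a.1.2 b.2⟩) fun a a' haa' =>
            Subtype.ext (Subtype.ext (congrArg Subtype.val haa' :))
      _ < #ι := (hF b).mk_nests_lt i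
  have hcover : ⋃ i, S i = Set.univ :=
    eq_univ_of_forall fun a => mem_iUnion.2 (D.nonempty_of_mem (inter_mem (hfh a) (hhg a)))
  have : #T ≤ #ι :=
    calc #T = #(⋃ i, S i) := by rw [hcover, mk_univ]
      _ ≤ #ι * ⨆ i, #(S i) := mk_iUnion_le _
      _ ≤ #ι * #ι := by gcongr; exact ciSup_le' hS
      _ = #ι := mul_eq_self hκ
  exact this.not_gt hT

theorem succ_succ_cut_of_measurable_general
    {ι : Type} (D : Ultrafilter ι)
    (hκ : ℵ₀ < #ι) (huni : IsUniformUF D) (hcomp : IsCompleteUF #ι D)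
    (J : Type) [LinearOrder J]
    (hsat : SatPlus (Order.succ #ι) J) :
    ∃ f g : (Order.succ #ι).ord.ToType → ι → J, RepCut D f g := by
  obtain ⟨F, hF⟩ := exists_isGoodExtension_family (J := J) hcomp huni hκ.le hsat
    (T := (Order.succ #ι).ord.ToType) fun b => Order.lt_succ_iff.mp (by simpa using mk_Iio_lt b)
  exact ⟨_, _, repCut_of_isGoodExtension hκ.le (by simp) F hF⟩

/-- Theorem 3.2: if `κ > ℵ₀` is measurable as witnessed by a uniform
`κ`-complete nonprincipal ultrafilter `D` on `κ`, then `(κ⁺, κ⁺) ∈ C(D)`: every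
`κ⁺⁺`-saturated dense linear order without endpoints admits sequences representing a
`(κ⁺, κ⁺)`-cut of `J^κ/D`. -/
theorem succ_succ_cut_of_measurable
    {ι : Type} (D : Ultrafilter ι) (hD : Nonprincipal D)
    (hκ : ℵ₀ < #ι) (huni : IsUniformUF D) (hcomp : IsCompleteUF #ι D)
    (J : Type) [LinearOrder J] [DenselyOrdered J] [NoMinOrder J] [NoMaxOrder J] [Nonempty J]
    (hsat : SatPlus (Order.succ #ι) J) :
    ∃ f g : (Order.succ #ι).ord.ToType → ι → J, RepCut D f g :=
  succ_succ_cut_of_measurable_general D hκ huni hcomp J hsat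
end
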